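/- Let P be a substochastic matrix on a countable set Λ, U ⊆ Λ a finite nonempty set, and define the taboo matrix Q_U(x,y) := P(x,y)·1{y ∉ U}. Let ρ ∈ (0,1) and R ∈ (ρ, 1]. Assume that Σ_{y∈Λ} Q_U^n(x,y) ≤ ρ^n for all x ∈ Λ and n ≥ 1, and that G := sup_{n≥0} R^{−n} max_{u∈U} Σ_{z∈Λ} P^n(u,z) < ∞. Then for every x ∈ Λ, limsup_{n→∞} R^{−n} Σ_{y∈Λ} P^n(x,y) ≤ G/(R − ρ). (In Markov-chain language: if the chain enters U exponentially fast and the renormalized survival probability from U is bounded, then the renormalized survival probability from any state is bounded; this is the paper's upper bound on the right eigenvector μ(x) = lim_n R^{−n}P_x(τ_0 > n) in the proof of Theorem 2.3.) -/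

import Mathlib

open Filter Topology

/-- Powers of a matrix indexed by a countable set: `matPow P 0 = Id`,
`matPow P (n+1) x y = ∑ z, matPow P n x z * P z y`. -/
noncomputable def matPow {Λ : Type*} [DecidableEq Λ] (P : Λ → Λ → ℝ) : ℕ → Λ → Λ → ℝ
  | 0 => fun x y => if x = y then 1 else 0
  | n + 1 => fun x y => ∑' z, matPow P n x z * P z y

/-!
Write `S n x = ∑' y, P^n(x, y)`. By induction on `n`, uniformly in `x`,
`S n x ≤ ρ ^ n + G R ^ n / (R - ρ)`: in the first-step decomposition
`S (n + 1) x = ∑' z, P(x, z) S n z`, the steps into `U` contribute at most `G R ^ n`, and the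
steps outside `U` have total mass at most `ρ` (the taboo bound for `n = 1`), so contribute at
most `ρ` times the bound for `S n`; the recursion `a (n + 1) = G R ^ n + ρ a n` is solved
exactly by `ρ ^ n + G R ^ n / (R - ρ)`. After dividing by `R ^ n`, the term `(ρ / R) ^ n` dies
in the limit.
-/

structure IsSubstochastic {Λ : Type*} (P : Λ → Λ → ℝ) : Prop where
  nonneg : ∀ x y, 0 ≤ P x y
  summable : ∀ x, Summable (P x)
  tsum_le_one : ∀ x, ∑' y, P x y ≤ 1

namespace IsSubstochastic

variable {Λ : Type*} {A B P : Λ → Λ → ℝ}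

theorem le_one (hP : IsSubstochastic P) (x y : Λ) : P x y ≤ 1 :=
  ((hP.summable x).le_tsum y fun z _ => hP.nonneg x z).trans (hP.tsum_le_one x)

section WeightedRowSums

variable (hP : IsSubstochastic P) {g : Λ → ℝ} (hg0 : ∀ y, 0 ≤ g y) (hg1 : ∀ y, g y ≤ 1)
include hP hg0 hg1

theorem summable_mul_of_le_one (x : Λ) : Summable fun y => P x y * g y :=
  (hP.summable x).of_nonneg_of_le (fun y => mul_nonneg (hP.nonneg x y) (hg0 y))
    fun y => mul_le_of_le_one_right (hP.nonneg x y) (hg1 y)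

theorem tsum_mul_le_one (x : Λ) : ∑' y, P x y * g y ≤ 1 :=
  ((hP.summable_mul_of_le_one hg0 hg1 x).tsum_le_tsum
    (fun y => mul_le_of_le_one_right (hP.nonneg x y) (hg1 y)) (hP.summable x)).trans
    (hP.tsum_le_one x)

theorem mul_diagonal : IsSubstochastic fun x y => P x y * g y where
  nonneg x y := mul_nonneg (hP.nonneg x y) (hg0 y)
  summable := hP.summable_mul_of_le_one hg0 hg1
  tsum_le_one := hP.tsum_mul_le_one hg0 hg1

end WeightedRowSums

theorem summable_prod_mul (hA : IsSubstochastic A) (hB : IsSubstochastic B) (x : Λ) :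
    Summable fun p : Λ × Λ => A x p.1 * B p.1 p.2 := by
  refine (summable_prod_of_nonneg fun p => mul_nonneg (hA.nonneg x p.1) (hB.nonneg p.1 p.2)).2
    ⟨fun z => (hB.summable z).mul_left (A x z), ?_⟩
  simpa only [tsum_mul_left] using
    hA.summable_mul_of_le_one (fun z => tsum_nonneg (hB.nonneg z)) hB.tsum_le_one x

theorem tsum_tsum_mul (hA : IsSubstochastic A) (hB : IsSubstochastic B) (x : Λ) :
    ∑' y, ∑' z, A x z * B z y = ∑' z, A x z * ∑' y, B z y := by
  calc ∑' y, ∑' z, A x z * B z y = ∑' z, ∑' y, A x z * B z y :=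
        (summable_prod_mul hA hB x).tsum_comm (f := fun z y => A x z * B z y)
    _ = ∑' z, A x z * ∑' y, B z y := tsum_congr fun z => tsum_mul_left

theorem mul (hA : IsSubstochastic A) (hB : IsSubstochastic B) :
    IsSubstochastic fun x y => ∑' z, A x z * B z y where
  nonneg x y := tsum_nonneg fun z => mul_nonneg (hA.nonneg x z) (hB.nonneg z y)
  summable x := (summable_prod_mul hA hB x).prod_symm.prod
  tsum_le_one x := by
    rw [tsum_tsum_mul hA hB x]
    exact hA.tsum_mul_le_one (fun z => tsum_nonneg (hB.nonneg z)) hB.tsum_le_one x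

variable [DecidableEq Λ]

theorem matPow_zero (P : Λ → Λ → ℝ) : IsSubstochastic (matPow P 0) where
  nonneg x y := by simp only [matPow]; split_ifs <;> norm_num
  summable x := (hasSum_ite_eq' x (1 : ℝ)).summable
  tsum_le_one x := (tsum_ite_eq' x (fun _ => (1 : ℝ))).le

theorem pow (hP : IsSubstochastic P) (n : ℕ) : IsSubstochastic (matPow P n) := by
  induction n with
  | zero => exact matPow_zero P
  | succ n ih => exact ih.mul hP

end IsSubstochastic

section MatPow

variable {Λ : Type*} [DecidableEq Λ]

theorem tsum_matPow_zero (P : Λ → Λ → ℝ) (x : Λ) : ∑' y, matPow P 0 x y = 1 :=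
  tsum_ite_eq' x (fun _ => (1 : ℝ))

theorem matPow_one (P : Λ → Λ → ℝ) : matPow P 1 = P := by
  ext x y
  simp [matPow, ite_mul, tsum_ite_eq']

theorem matPow_add {P : Λ → Λ → ℝ} (hP : IsSubstochastic P) (m n : ℕ) (x y : Λ) :
    matPow P (m + n) x y = ∑' z, matPow P m x z * matPow P n z y := by
  induction n generalizing y with
  | zero => simp [matPow, mul_ite, tsum_ite_eq]
  | succ n ih =>
    have hcol := (hP.pow n).mul_diagonal (fun w => hP.nonneg w y) (fun w => hP.le_one w y)
    calc matPow P (m + (n + 1)) x y = ∑' w, matPow P (m + n) x w * P w y := rfl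
      _ = ∑' w, ∑' z, matPow P m x z * (matPow P n z w * P w y) := by
        simp only [ih, ← tsum_mul_right, mul_assoc]
      _ = ∑' z, matPow P m x z * ∑' w, matPow P n z w * P w y :=
        (hP.pow m).tsum_tsum_mul hcol x
      _ = ∑' z, matPow P m x z * matPow P (n + 1) z y := rfl

theorem tsum_matPow_succ {P : Λ → Λ → ℝ} (hP : IsSubstochastic P) (n : ℕ) (x : Λ) :
    ∑' y, matPow P (n + 1) x y = ∑' z, P x z * ∑' y, matPow P n z y := by
  simp only [add_comm n 1, matPow_add hP 1 n, matPow_one]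
  exact hP.tsum_tsum_mul (hP.pow n) x

end MatPow

theorem tsum_matPow_le_of_exit_le {Λ : Type*} [DecidableEq Λ] {P : Λ → Λ → ℝ}
    (hP : IsSubstochastic P) (U : Set Λ) [DecidablePred (· ∈ U)] {ρ R G : ℝ} (hρ : 0 ≤ ρ)
    (hρR : ρ < R) (hG : 0 ≤ G) (hexit : ∀ x, ∑' z, (if z ∈ U then 0 else P x z) ≤ ρ)
    (hU : ∀ n, ∀ u ∈ U, ∑' z, matPow P n u z ≤ G * R ^ n) (n : ℕ) (x : Λ) :
    ∑' y, matPow P n x y ≤ ρ ^ n + G * R ^ n / (R - ρ) := by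
  have hRρ : 0 < R - ρ := sub_pos.2 hρR
  have hR : 0 ≤ R := hρ.trans hρR.le
  induction n generalizing x with
  | zero =>
    rw [tsum_matPow_zero, pow_zero, pow_zero, mul_one]
    exact le_add_of_nonneg_right (div_nonneg hG hRρ.le)
  | succ n ih =>
    set a := ρ ^ n + G * R ^ n / (R - ρ) with ha_def
    have hGR : 0 ≤ G * R ^ n := mul_nonneg hG (pow_nonneg hR n)
    have ha : 0 ≤ a := add_nonneg (pow_nonneg hρ n) (div_nonneg hGR hRρ.le)
    have hQ : Summable fun z => if z ∈ U then 0 else P x z :=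
      (hP.summable x).of_nonneg_of_le (fun z => by split_ifs <;> simp [hP.nonneg x z])
        (fun z => by split_ifs <;> simp [hP.nonneg x z])
    have hstep : ∀ z, P x z * ∑' y, matPow P n z y
        ≤ G * R ^ n * P x z + a * (if z ∈ U then 0 else P x z) := by
      intro z
      have hPz := hP.nonneg x z
      by_cases hz : z ∈ U
      · simpa [hz, mul_comm] using mul_le_mul_of_nonneg_left (hU n z hz) hPz
      · simpa [hz, mul_comm] using
          add_le_add (mul_nonneg hGR hPz) (mul_le_mul_of_nonneg_left (ih z) hPz)
    calc ∑' y, matPow P (n + 1) x y = ∑' z, P x z * ∑' y, matPow P n z y :=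
          tsum_matPow_succ hP n x
      _ ≤ ∑' z, (G * R ^ n * P x z + a * (if z ∈ U then 0 else P x z)) :=
          Summable.tsum_le_tsum hstep
            (hP.summable_mul_of_le_one (fun z => tsum_nonneg ((hP.pow n).nonneg z))
              (hP.pow n).tsum_le_one x)
            (((hP.summable x).mul_left _).add (hQ.mul_left a))
      _ = G * R ^ n * ∑' z, P x z + a * ∑' z, (if z ∈ U then 0 else P x z) := by
          rw [((hP.summable x).mul_left _).tsum_add (hQ.mul_left a), tsum_mul_left, tsum_mul_left]
      _ ≤ G * R ^ n * 1 + a * ρ := by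
          gcongr
          exacts [hP.tsum_le_one x, hexit x]
      _ = ρ ^ (n + 1) + G * R ^ (n + 1) / (R - ρ) := by
          rw [ha_def]
          field_simp
          ring

theorem limsup_le_of_le_of_tendsto {α β : Type*} [ConditionallyCompleteLinearOrder β]
    [TopologicalSpace β] [OrderTopology β] {l : Filter α} [l.NeBot] {u v : α → β} {c : β}
    (hu : IsBoundedUnder (· ≥ ·) l u) (huv : u ≤ᶠ[l] v) (hv : Tendsto v l (𝓝 c)) :
    limsup u l ≤ c :=
  (limsup_le_limsup huv hu.isCoboundedUnder_le hv.isBoundedUnder_le).trans_eq hv.limsup_eq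

theorem renormalized_survival_upper_bound_general
    {Λ : Type*} [DecidableEq Λ]
    (P : Λ → Λ → ℝ)
    -- substochastic
    (hP0 : ∀ x y, 0 ≤ P x y)
    (hPsum : ∀ x, Summable (P x))
    (hP1 : ∀ x, ∑' y, P x y ≤ 1)
    (U : Finset Λ) (hUne : U.Nonempty)
    (ρ R G : ℝ) (hρ0 : 0 < ρ) (hρR : ρ < R)
    -- taboo row sums decay exponentially: Σ_y Q_U^n(x,y) ≤ ρ^n
    (htaboo : ∀ x, ∀ n : ℕ, 1 ≤ n →
      (∑' y, matPow (fun a b => if b ∈ U then 0 else P a b) n x y) ≤ ρ ^ n)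
    -- G bounds the renormalized survival probability from U:
    -- G = sup_{n≥0} R^{-n} max_{u∈U} Σ_z P^n(u,z) < ∞
    (hG : ∀ n : ℕ, ∀ u ∈ U, (∑' z, matPow P n u z) / R ^ n ≤ G) :
    ∀ x, Filter.limsup (fun n : ℕ => (∑' y, matPow P n x y) / R ^ n) atTop
      ≤ G / (R - ρ) := by
  intro x
  have hP : IsSubstochastic P := ⟨hP0, hPsum, hP1⟩
  have hR : 0 < R := hρ0.trans hρR
  have hGR : ∀ n, ∀ u ∈ (U : Set Λ), ∑' z, matPow P n u z ≤ G * R ^ n :=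
    fun n u hu => (div_le_iff₀ (pow_pos hR n)).1 (hG n u hu)
  have hG0 : 0 ≤ G := by
    obtain ⟨u, hu⟩ := hUne
    exact zero_le_one.trans (by simpa [tsum_matPow_zero] using hG 0 u hu)
  have hexit : ∀ x, ∑' z, (if z ∈ (U : Set Λ) then 0 else P x z) ≤ ρ := fun x => by
    simpa [matPow_one] using htaboo x 1 le_rfl
  have hbound : ∀ n, (∑' y, matPow P n x y) / R ^ n ≤ (ρ / R) ^ n + G / (R - ρ) := by
    intro n
    rw [div_le_iff₀ (pow_pos hR n), add_mul, div_pow, div_mul_cancel₀ _ (pow_pos hR n).ne',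
      div_mul_eq_mul_div]
    exact tsum_matPow_le_of_exit_le hP U hρ0.le hρR hG0 hexit hGR n x
  have hnonneg : ∀ n, 0 ≤ (∑' y, matPow P n x y) / R ^ n :=
    fun n => div_nonneg (tsum_nonneg ((hP.pow n).nonneg x)) (pow_pos hR n).le
  refine limsup_le_of_le_of_tendsto ⟨0, eventually_map.2 (Eventually.of_forall hnonneg)⟩
    (Eventually.of_forall hbound) ?_
  simpa using (tendsto_pow_atTop_nhds_zero_of_lt_one (div_pos hρ0 hR).le
    ((div_lt_one hR).2 hρR)).add_const (G / (R - ρ))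

/-- if the chain enters the finite set `U` exponentially fast
(row sums of the taboo matrix `Q_U` decay like `ρⁿ`) and the renormalized survival
probability from `U` is bounded by `G`, then the renormalized survival probability
from any state has `limsup` at most `G/(R−ρ)`. -/
theorem renormalized_survival_upper_bound
    {Λ : Type*} [Countable Λ] [DecidableEq Λ]
    (P : Λ → Λ → ℝ)
    -- substochastic
    (hP0 : ∀ x y, 0 ≤ P x y)
    (hPsum : ∀ x, Summable (P x))
    (hP1 : ∀ x, ∑' y, P x y ≤ 1)
    (U : Finset Λ) (hUne : U.Nonempty)
    (ρ R G : ℝ) (hρ0 : 0 < ρ) (hρ1 : ρ < 1) (hρR : ρ < R) (hR1 : R ≤ 1)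
    -- taboo row sums decay exponentially: Σ_y Q_U^n(x,y) ≤ ρ^n
    (htaboo : ∀ x, ∀ n : ℕ, 1 ≤ n →
      (∑' y, matPow (fun a b => if b ∈ U then 0 else P a b) n x y) ≤ ρ ^ n)
    -- G bounds the renormalized survival probability from U:
    -- G = sup_{n≥0} R^{-n} max_{u∈U} Σ_z P^n(u,z) < ∞
    (hG : ∀ n : ℕ, ∀ u ∈ U, (∑' z, matPow P n u z) / R ^ n ≤ G) :
    ∀ x, Filter.limsup (fun n : ℕ => (∑' y, matPow P n x y) / R ^ n) atTop
      ≤ G / (R - ρ) :=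
  renormalized_survival_upper_bound_general P hP0 hPsum hP1 U hUne ρ R G hρ0 hρR htaboo hG
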